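/- Let K be a field with a degree-lexicographic monomial order on K[X,Y] (entries of two n×n matrices of indeterminates X, Y) satisfying X_{11} > X_{21} > ... > X_{n1} > X_{12} > ... > X_{nn} > Y_{11} > ... > Y_{nn}. Then for each 0 ≤ k ≤ n, the leading monomial of f_{k,n-k} = Σ_{S⊆[n],|S|=k} det(Z^S) is X_{11}X_{22}⋯X_{kk}·Y_{k+1,k+1}⋯Y_{nn}. -/

import Mathlib

open MvPolynomial

/-- Significance key of the variable T_{ijk}: the variables are ordered
X_{11} > X_{21} > ... > X_{n1} > X_{12} > ... > X_{nn} > Y_{11} > ... > Y_{nn}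
(X = (T_{ij0}), Y = (T_{ij1})), smaller key = more significant (larger) variable. -/
def varKey (n : ℕ) (v : Fin n × Fin n × Fin 2) : ℕ :=
  (v.2.2 : ℕ) * (n * n) + (v.2.1 : ℕ) * n + (v.1 : ℕ)

/-- Degree-lexicographic strict order on monomials (exponent vectors): first compare
total degrees; for equal total degrees compare lexicographically, the most significant
(smallest key) variable where the exponents differ deciding. -/
def monLT (n : ℕ) (a b : (Fin n × Fin n × Fin 2) →₀ ℕ) : Prop :=
  (a.sum fun _ e => e) < (b.sum fun _ e => e) ∨
    ((a.sum fun _ e => e) = (b.sum fun _ e => e) ∧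
      ∃ v, (∀ w, varKey n w < varKey n v → a w = b w) ∧ a v < b v)

/-- `μ` is the leading monomial of `f` w.r.t. the degree-lexicographic order. -/
def IsLeadMon {K : Type*} [CommSemiring K] (n : ℕ)
    (f : MvPolynomial (Fin n × Fin n × Fin 2) K) (μ : (Fin n × Fin n × Fin 2) →₀ ℕ) : Prop :=
  μ ∈ f.support ∧ ∀ ν ∈ f.support, ν ≠ μ → monLT n ν μ


/-!
Expanding every determinant, `f_{k,n-k}` is a sum of monomials `± ∏ⱼ Z^S_{π j, j}`, indexed by
a `k`-set `S` and a permutation `π`, all of total degree `n`. The claimed leading monomial is the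
one for `S = {1, …, k}`, `π = id`. For any other pair, look at the first column `j₀` where `π` or
the choice of `X`/`Y` deviates from it: all variables more significant than `Z_{j₀ j₀}` occur to the
same power in both monomials, and `Z_{j₀ j₀}` occurs only in the diagonal one. The only subtle
case is when `Z_{j₀ j₀}` is a `Y`, so that every `X` is more significant; then `S` already contains
`1, …, k`, hence `S = {1, …, k}` by cardinality, and no `X` beyond column `k` is used.
-/

open Finset Equiv

namespace MvPolynomial

theorem det_of_X {R τ n : Type*} [CommRing R] [Fintype n] [DecidableEq n] (v : n → n → τ) :
    (Matrix.of fun i j => (X (v i j) : MvPolynomial τ R)).det =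
      ∑ π : Perm n, monomial (∑ j, Finsupp.single (v (π j) j) 1) (Perm.sign π : R) := by
  rw [Matrix.det_apply]
  refine sum_congr rfl fun π _ => ?_
  simp only [Matrix.of_apply, X, ← monomial_sum_one, Units.smul_def]
  rw [smul_monomial, Int.smul_one_eq_cast]

variable {R σ ι : Type*} [CommSemiring R] {s : Finset ι} {m : ι → σ →₀ ℕ} {c : ι → R}

theorem coeff_sum_monomial_of_ne {i₀ : ι} (hi₀ : i₀ ∈ s)
    (hne : ∀ i ∈ s, i ≠ i₀ → m i ≠ m i₀) :
    coeff (m i₀) (∑ i ∈ s, monomial (m i) (c i)) = c i₀ := by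
  classical
  rw [coeff_sum, sum_eq_single_of_mem i₀ hi₀ fun i hi h => ?_, coeff_monomial, if_pos rfl]
  rw [coeff_monomial, if_neg (hne i hi h)]

theorem exists_eq_of_mem_support_sum_monomial {ν : σ →₀ ℕ}
    (hν : ν ∈ (∑ i ∈ s, monomial (m i) (c i)).support) : ∃ i ∈ s, m i = ν := by
  classical
  obtain ⟨i, hi, hν⟩ := mem_biUnion.1 (support_sum hν)
  exact ⟨i, hi, (mem_singleton.1 (support_monomial_subset hν)).symm⟩

end MvPolynomial

theorem Nat.mul_add_lt_mul_add_iff {m a a' b b' : ℕ} (ha : a < m) (ha' : a' < m) :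
    b * m + a < b' * m + a' ↔ b < b' ∨ b = b' ∧ a < a' := by
  constructor
  · intro h
    rcases lt_trichotomy b b' with hb | rfl | hb
    · exact Or.inl hb
    · exact Or.inr ⟨rfl, by omega⟩
    · nlinarith
  · rintro (hb | ⟨rfl, h⟩)
    · nlinarith
    · omega

theorem Equiv.Perm.le_apply_of_forall_lt_apply_eq {α : Type*} [LinearOrder α] {π : Perm α}
    {j : α} (h : ∀ i < j, π i = i) : j ≤ π j := by
  by_contra! hlt
  exact hlt.ne (π.injective (h _ hlt))

variable {n k : ℕ}

theorem varKey_lt_varKey_iff {r r' j j' : Fin n} {t t' : Fin 2} :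
    varKey n (r, j, t) < varKey n (r', j', t') ↔ t < t' ∨ t = t' ∧ (j < j' ∨ j = j' ∧ r < r') := by
  have hlt (i l : Fin n) : (l : ℕ) * n + i < n * n := by nlinarith [i.2, l.2]
  simp only [varKey, add_assoc, Nat.mul_add_lt_mul_add_iff (hlt r j) (hlt r' j'),
    Nat.mul_add_lt_mul_add_iff r.2 r'.2, Fin.lt_def, Fin.ext_iff]

theorem monLT_irrefl (a : (Fin n × Fin n × Fin 2) →₀ ℕ) : ¬ monLT n a a := by
  rintro (h | ⟨-, v, -, h⟩) <;> exact lt_irrefl _ h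

theorem isLeadMon_sum_monomial {K ι : Type*} [CommSemiring K] {s : Finset ι}
    {m : ι → (Fin n × Fin n × Fin 2) →₀ ℕ} {c : ι → K} {i₀ : ι} (hi₀ : i₀ ∈ s) (hc : c i₀ ≠ 0)
    (hlt : ∀ i ∈ s, i ≠ i₀ → monLT n (m i) (m i₀)) :
    IsLeadMon n (∑ i ∈ s, monomial (m i) (c i)) (m i₀) := by
  refine ⟨?_, fun ν hν hne => ?_⟩
  · rw [mem_support_iff, coeff_sum_monomial_of_ne hi₀ fun i hi h he => ?_]
    · exact hc
    · exact monLT_irrefl _ (he ▸ hlt i hi h)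
  · obtain ⟨i, hi, rfl⟩ := exists_eq_of_mem_support_sum_monomial hν
    exact hlt i hi (fun h => hne (h ▸ rfl))

/-- The third index of the variables in column `j` of `Z^S`. -/
def colour (S : Finset (Fin n)) (j : Fin n) : Fin 2 := if j ∈ S then 0 else 1

theorem colour_injective : Function.Injective (colour (n := n)) := by
  intro S T h
  ext j
  have := congrFun h j
  unfold colour at this
  split_ifs at this <;> simp_all

theorem colour_eq_zero_iff {S : Finset (Fin n)} {j : Fin n} : colour S j = 0 ↔ j ∈ S := by
  simp [colour]

def initSeg (n k : ℕ) : Finset (Fin n) := {i | (i : ℕ) < k}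

@[simp]
theorem mem_initSeg {j : Fin n} : j ∈ initSeg n k ↔ (j : ℕ) < k := by
  simp [initSeg]

theorem colour_initSeg (j : Fin n) : colour (initSeg n k) j = if (j : ℕ) < k then 0 else 1 := by
  simp [colour]

noncomputable def termExp (S : Finset (Fin n)) (π : Perm (Fin n)) :
    (Fin n × Fin n × Fin 2) →₀ ℕ :=
  ∑ j, Finsupp.single (π j, j, colour S j) 1

theorem termExp_apply (S : Finset (Fin n)) (π : Perm (Fin n)) (r j : Fin n) (t : Fin 2) :
    termExp S π (r, j, t) = if r = π j ∧ t = colour S j then 1 else 0 := by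
  rw [termExp, Finsupp.finsetSum_apply, sum_eq_single j]
  · simp [Finsupp.single_apply, Prod.ext_iff, eq_comm]
  · intro i _ hi
    simp [Prod.ext_iff, hi]
  · simp

theorem degree_termExp (S : Finset (Fin n)) (π : Perm (Fin n)) :
    ((termExp S π).sum fun _ e => e) = n := by
  change Finsupp.degree _ = n
  simp [termExp]

theorem eq_initSeg_of_card_eq {S : Finset (Fin n)} (hS : #S = k)
    (h : ∀ i : Fin n, (i : ℕ) < k → i ∈ S) : S = initSeg n k := by
  refine (eq_of_subset_of_card_le (fun i hi => h i (mem_initSeg.1 hi)) ?_).symm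
  rw [initSeg, Fin.card_filter_val_lt, ← hS]
  exact le_min (card_le_univ S |>.trans_eq (Fintype.card_fin n)) le_rfl

theorem termExp_lt_termExp_initSeg {S : Finset (Fin n)} (hS : #S = k) {π : Perm (Fin n)}
    (hne : (S, π) ≠ (initSeg n k, 1)) :
    monLT n (termExp S π) (termExp (initSeg n k) 1) := by
  set I := initSeg n k
  obtain ⟨j₀, hj₀, hbelow⟩ : ∃ j₀, ¬(π j₀ = j₀ ∧ colour S j₀ = colour I j₀) ∧
      ∀ i < j₀, π i = i ∧ colour S i = colour I i := by
    have hdiff : ∃ j, ¬(π j = j ∧ colour S j = colour I j) := by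
      by_contra! h
      exact hne (Prod.ext (colour_injective (funext fun j => (h j).2)) (Equiv.ext fun j => (h j).1))
    obtain ⟨j₀, hj₀, hmin⟩ := wellFounded_lt.has_min _ hdiff
    exact ⟨j₀, hj₀, fun i hi => not_not.1 fun h => hmin i h hi⟩
  have hπj₀ : j₀ ≤ π j₀ := Perm.le_apply_of_forall_lt_apply_eq fun i hi => (hbelow i hi).1
  refine Or.inr ⟨by rw [degree_termExp, degree_termExp], (j₀, j₀, colour I j₀), ?_, ?_⟩
  · rintro ⟨r, j, t⟩ hw
    rw [termExp_apply, termExp_apply, Perm.one_apply]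
    obtain ht | ⟨rfl, hj | ⟨rfl, hr⟩⟩ := varKey_lt_varKey_iff.1 hw
    · have hk : k ≤ j₀ := by
        by_contra! h
        simp [I, colour_initSeg, h] at ht
      have hSI : S = I := eq_initSeg_of_card_eq hS fun i hi => by
        rw [← colour_eq_zero_iff, (hbelow i (by omega)).2, colour_initSeg, if_pos hi]
      subst hSI
      refine if_congr (and_congr_left fun htj => ?_) rfl rfl
      have hj : (j : ℕ) < k := by
        have hj0 : colour I j = 0 := by omega
        exact mem_initSeg.1 (colour_eq_zero_iff.1 hj0)
      rw [(hbelow j (by omega)).1]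
    · rw [(hbelow j hj).1, (hbelow j hj).2]
    · simp [hr.ne, (hr.trans_le hπj₀).ne]
  · rw [termExp_apply, termExp_apply, if_neg fun h => hj₀ ⟨h.1.symm, h.2.symm⟩, Perm.one_apply,
      if_pos ⟨rfl, rfl⟩]
    exact Nat.zero_lt_one

theorem det_colouredMatrix {R : Type*} [CommRing R] (S : Finset (Fin n)) :
    (Matrix.of fun i j => (X (i, j, colour S j) : MvPolynomial (Fin n × Fin n × Fin 2) R)).det =
      ∑ π : Perm (Fin n), monomial (termExp S π) (Perm.sign π : R) :=
  det_of_X _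

theorem leadMon_f (K : Type*) [Field K] (n : ℕ) (k : ℕ) (hk : k ≤ n) :
    IsLeadMon n
      (∑ S ∈ Finset.powersetCard k (Finset.univ : Finset (Fin n)),
        (Matrix.of fun i j =>
            if j ∈ S then
              (MvPolynomial.X (i, j, (0 : Fin 2)) :
                MvPolynomial (Fin n × Fin n × Fin 2) K)
            else MvPolynomial.X (i, j, (1 : Fin 2))).det)
      (∑ i : Fin n,
        Finsupp.single (i, i, if (i : ℕ) < k then (0 : Fin 2) else 1) 1) := by
  have hZ (S : Finset (Fin n)) (i j : Fin n) :
      (if j ∈ S then (X (i, j, 0) : MvPolynomial (Fin n × Fin n × Fin 2) K) else X (i, j, 1)) =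
        X (i, j, colour S j) := by
    unfold colour
    split_ifs <;> rfl
  have hμ : (∑ i : Fin n, Finsupp.single (i, i, if (i : ℕ) < k then (0 : Fin 2) else 1) 1) =
      termExp (initSeg n k) 1 := by
    simp only [termExp, colour_initSeg, Perm.one_apply]
  simp only [hZ, det_colouredMatrix, hμ, ← sum_product']
  have hI : (initSeg n k, (1 : Perm (Fin n))) ∈ powersetCard k univ ×ˢ univ := by
    simp [mem_powersetCard, initSeg, Fin.card_filter_val_lt, hk]
  exact isLeadMon_sum_monomial hI (by simp)
    fun p hp hne => termExp_lt_termExp_initSeg (mem_powersetCard.1 (mem_product.1 hp).1).2 hne
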